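/- arXiv:2212.03783 — 4 statements merged into one kernel-verified Lean document; each statement's English description precedes it below -/
import Mathlib

section
/- Let m ≥ 1 and let h ∈ ℝ^m have all coordinates nonzero. For every β ∈ [‖h‖₂/‖h‖₁, 1] there exists α ∈ [1, α_max] such that γ(α)/α is an optimal solution of the localized-width problem for |h| at level β; that is, ‖γ(α)/α‖₁ = 1, ‖γ(α)/α‖₂ ≤ β, and ⟨γ(α)/α, |h|⟩ = sup{⟨v, |h|⟩ : v ∈ ℝ^m, ‖v‖₂ ≤ β, ‖v‖₁ ≤ 1}. -/
/-- The ℓ1 norm on `Fin m → ℝ`. -/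
noncomputable def l1 {m : ℕ} (a : Fin m → ℝ) : ℝ := ∑ i, |a i|

/-- The ℓ2 norm on `Fin m → ℝ`. -/
noncomputable def l2 {m : ℕ} (a : Fin m → ℝ) : ℝ := Real.sqrt (∑ i, (a i) ^ 2)

/-- The ℓ∞ norm on `Fin m → ℝ` (as a supremum over coordinates). -/
noncomputable def linf {m : ℕ} (a : Fin m → ℝ) : ℝ := ⨆ i, |a i|

/-- The constraint set
`K_α = {w : ⟨w, |h|⟩ ≥ ‖h‖_∞, w_j ≥ 0 for all j, Σ_j w_j = α}`. -/
noncomputable def Kset (m : ℕ) (h : Fin m → ℝ) (α : ℝ) : Set (Fin m → ℝ) :=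
  {w | linf h ≤ (∑ j, w j * |h j|) ∧ (∀ j, 0 ≤ w j) ∧ (∑ j, w j) = α}

/-- `γ : α ↦ γ(α)` is the path of minimizers: for every `α ≥ 1`, `γ(α)` minimizes
`w ↦ ‖w‖₂²` over `K_α` (this minimizer is unique, so this characterizes `γ`). -/
def IsGammaPath (m : ℕ) (h : Fin m → ℝ) (γ : ℝ → Fin m → ℝ) : Prop :=
  ∀ α : ℝ, 1 ≤ α → γ α ∈ Kset m h α ∧
    ∀ w ∈ Kset m h α, (∑ j, (γ α j) ^ 2) ≤ ∑ j, (w j) ^ 2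

/-- `α_max := m ‖h‖_∞ / ‖h‖₁`. -/
noncomputable def alphaMax (m : ℕ) (h : Fin m → ℝ) : ℝ := m * linf h / l1 h

/-- The localized Gaussian width `ℓ*_h(β B₂ ∩ B₁)`. -/
noncomputable def locWidth {m : ℕ} (h : Fin m → ℝ) (β : ℝ) : ℝ :=
  sSup {t : ℝ | ∃ v : Fin m → ℝ, l2 v ≤ β ∧ l1 v ≤ 1 ∧ t = ∑ i, v i * h i}

lemma l2_eq_norm {m : ℕ} (a : Fin m → ℝ) : l2 a = ‖(WithLp.equiv 2 (Fin m → ℝ)).symm a‖ := by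
  rw [EuclideanSpace.norm_eq]; simp [l2, Real.norm_eq_abs, sq_abs]

lemma l2_add_le {m : ℕ} (a b : Fin m → ℝ) : l2 (fun i => a i + b i) ≤ l2 a + l2 b := by
  rw [l2_eq_norm, l2_eq_norm, l2_eq_norm]
  exact norm_add_le ((WithLp.equiv 2 (Fin m → ℝ)).symm a) ((WithLp.equiv 2 (Fin m → ℝ)).symm b)

lemma l2_smul {m : ℕ} (c : ℝ) (a : Fin m → ℝ) : l2 (fun i => c * a i) = |c| * l2 a := by
  simp only [l2, mul_pow, ← Finset.mul_sum, Real.sqrt_mul (sq_nonneg c), Real.sqrt_sq_eq_abs]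

lemma l2_le_l2 {m : ℕ} {a b : Fin m → ℝ} (hab : ∑ i, a i ^ 2 ≤ ∑ i, b i ^ 2) : l2 a ≤ l2 b :=
  Real.sqrt_le_sqrt hab

lemma cauchy {m : ℕ} (a b : Fin m → ℝ) : ∑ i, a i * b i ≤ l2 a * l2 b := by
  have h := Finset.sum_mul_sq_le_sq_mul_sq Finset.univ a b
  calc ∑ i, a i * b i ≤ |∑ i, a i * b i| := le_abs_self _
    _ = Real.sqrt ((∑ i, a i * b i) ^ 2) := (Real.sqrt_sq_eq_abs _).symm
    _ ≤ Real.sqrt ((∑ i, a i ^ 2) * ∑ i, b i ^ 2) := Real.sqrt_le_sqrt h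
    _ = l2 a * l2 b := Real.sqrt_mul (Finset.sum_nonneg fun i _ => sq_nonneg _) _

lemma l1_smul {m : ℕ} {c : ℝ} (hc : 0 ≤ c) (a : Fin m → ℝ) :
    l1 (fun i => c * a i) = c * l1 a := by
  unfold l1
  rw [Finset.mul_sum]
  exact Finset.sum_congr rfl fun i _ => by rw [abs_mul, abs_of_nonneg hc]

lemma l1_abs {m : ℕ} (a : Fin m → ℝ) : l1 (fun i => |a i|) = l1 a := by
  unfold l1; simp [abs_abs]

lemma l1_cont {m : ℕ} : Continuous fun v : Fin m → ℝ => l1 v := by unfold l1; fun_prop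
lemma l2_cont {m : ℕ} : Continuous fun v : Fin m → ℝ => l2 v := by unfold l2; fun_prop

theorem stmt3 (m : ℕ) (hm : 1 ≤ m) (h : Fin m → ℝ) (hh : ∀ j, h j ≠ 0)
    (γ : ℝ → Fin m → ℝ) (hγ : IsGammaPath m h γ)
    (β : ℝ) (hβ₁ : l2 h / l1 h ≤ β) (hβ₂ : β ≤ 1) :
    ∃ α : ℝ, 1 ≤ α ∧ α ≤ alphaMax m h ∧
      l1 (fun j => γ α j / α) = 1 ∧
      l2 (fun j => γ α j / α) ≤ β ∧
      (∑ j, (γ α j / α) * |h j|) = locWidth (fun j => |h j|) β := by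
  haveI : Nonempty (Fin m) := Fin.pos_iff_nonempty.mp hm
  have hHpos : ∀ j, 0 < |h j| := fun j => abs_pos.mpr (hh j)
  have hm0 : (0:ℝ) < m := by exact_mod_cast Nat.lt_of_lt_of_le Nat.zero_lt_one hm
  have hl1h : 0 < l1 h := Finset.sum_pos (fun i _ => hHpos i) Finset.univ_nonempty
  have hl2h : 0 < l2 h := Real.sqrt_pos.mpr
    (Finset.sum_pos (fun i _ => lt_of_le_of_ne (sq_nonneg _) (Ne.symm (pow_ne_zero 2 (hh i)))) Finset.univ_nonempty)
  have hβ0 : 0 < β := lt_of_lt_of_le (div_pos hl2h hl1h) hβ₁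
  have hlinf_ub : ∀ j, |h j| ≤ linf h := fun j => by unfold linf; exact le_ciSup (Set.Finite.bddAbove (Set.finite_range fun i => |h i|)) j
  have hlinf_pos : 0 < linf h := lt_of_lt_of_le (hHpos (Classical.arbitrary _)) (hlinf_ub _)
  -- the feasible set S and the objective f
  set f : (Fin m → ℝ) → ℝ := fun v => ∑ i, v i * |h i| with hf
  set S : Set (Fin m → ℝ) := {v | l2 v ≤ β ∧ l1 v ≤ 1} with hS
  -- compactness of S
  have hScl : IsClosed S := (isClosed_le l2_cont continuous_const).inter
    (isClosed_le l1_cont continuous_const)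
  have hSsub : S ⊆ Metric.closedBall 0 1 := by
    intro v hv
    rw [Metric.mem_closedBall, dist_zero_right]
    rw [pi_norm_le_iff_of_nonneg zero_le_one]
    intro i
    calc ‖v i‖ = |v i| := rfl
      _ ≤ l1 v := Finset.single_le_sum (fun j _ => abs_nonneg (v j)) (Finset.mem_univ i)
      _ ≤ 1 := hv.2
  have hScomp : IsCompact S := (isCompact_closedBall 0 1).of_isClosed_subset hScl hSsub
  have hSne : S.Nonempty := ⟨0, by
    constructor
    · simp [l2, Real.sqrt_zero]; positivity
    · simp [l1]⟩
  have hfc : ContinuousOn f S := (by unfold f; fun_prop : Continuous f).continuousOn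
  obtain ⟨v₀, hv₀S, hv₀max⟩ := hScomp.exists_isMaxOn hSne hfc
  -- replace by the coordinatewise absolute value
  set vs : Fin m → ℝ := fun i => |v₀ i| with hvs
  have hvsS : vs ∈ S := by
    constructor
    · refine le_trans (le_of_eq ?_) hv₀S.1
      unfold l2; congr 1; exact Finset.sum_congr rfl fun i _ => by simp [vs, sq_abs]
    · refine le_trans (le_of_eq ?_) hv₀S.2
      unfold l1; exact Finset.sum_congr rfl fun i _ => by simp [vs]
  have hvsmax : ∀ x ∈ S, f x ≤ f vs := fun x hx => le_trans (hv₀max hx)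
    (Finset.sum_le_sum fun i _ => mul_le_mul_of_nonneg_right (le_abs_self _) (abs_nonneg _))
  have hvs0 : ∀ i, 0 ≤ vs i := fun i => abs_nonneg _
  have hvssum : ∑ i, vs i = l1 vs := Finset.sum_congr rfl fun i _ => (abs_of_nonneg (hvs0 i)).symm
  -- the ray point u = (β/‖h‖₂)|h|
  set u : Fin m → ℝ := fun i => (β / l2 h) * |h i| with hu
  have hl2abs : l2 (fun i => |h i|) = l2 h := by
    unfold l2; congr 1; exact Finset.sum_congr rfl fun i _ => sq_abs _
  have hsumsq : ∑ i, |h i| ^ 2 = l2 h ^ 2 := by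
    rw [l2, Real.sq_sqrt (Finset.sum_nonneg fun i _ => sq_nonneg _)]
    exact Finset.sum_congr rfl fun i _ => sq_abs _
  have hβdiv : 0 ≤ β / l2 h := div_nonneg hβ0.le hl2h.le
  have hul2 : l2 u = β := by
    rw [hu, l2_smul, hl2abs, abs_of_nonneg hβdiv, div_mul_cancel₀ _ hl2h.ne']
  have hul1 : l1 u = (β / l2 h) * l1 h := by
    unfold l1
    rw [Finset.mul_sum]
    exact Finset.sum_congr rfl fun i _ => by
      rw [abs_mul, abs_of_nonneg hβdiv, abs_abs]
  have hul1ge : 1 ≤ l1 u := by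
    rw [hul1]
    rw [div_le_iff₀ hl1h] at hβ₁
    rw [div_mul_eq_mul_div, le_div_iff₀ hl2h, one_mul]
    linarith
  have hu0 : ∀ i, 0 ≤ u i := fun i => mul_nonneg hβdiv (abs_nonneg _)
  have husum : ∑ i, u i = l1 u := Finset.sum_congr rfl fun i _ => (abs_of_nonneg (hu0 i)).symm
  have hfu : f u = β * l2 h := by
    unfold f
    simp only [hu, mul_assoc, ← Finset.mul_sum, ← sq]
    rw [hsumsq, div_mul_eq_mul_div, sq, mul_div_assoc, mul_div_cancel_left₀ _ hl2h.ne']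
  have hfvs_le : f vs ≤ f u := by
    calc f vs ≤ l2 vs * l2 (fun i => |h i|) := cauchy vs _
      _ = l2 vs * l2 h := by rw [hl2abs]
      _ ≤ β * l2 h := mul_le_mul_of_nonneg_right hvsS.1 hl2h.le
      _ = f u := hfu.symm
  -- obtain a maximizer with ℓ1 norm exactly 1
  obtain ⟨w, hwS, hw0, hwl1, hwmax⟩ :
      ∃ w, w ∈ S ∧ (∀ i, 0 ≤ w i) ∧ l1 w = 1 ∧ ∀ x ∈ S, f x ≤ f w := by
    rcases eq_or_lt_of_le hvsS.2 with hseq | hslt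
    · exact ⟨vs, hvsS, hvs0, hseq, hvsmax⟩
    · set s := l1 vs
      set L := l1 u
      have hLs : s < L := lt_of_lt_of_le hslt hul1ge
      have hLs0 : 0 < L - s := sub_pos.mpr hLs
      set t := (1 - s) / (L - s) with htdef
      have ht0 : 0 ≤ t := div_nonneg (by linarith) hLs0.le
      have ht1 : t ≤ 1 := by
        rw [div_le_one hLs0]; linarith
      have ht1' : (0:ℝ) ≤ 1 - t := by linarith
      have hw0' : ∀ i, 0 ≤ (1 - t) * vs i + t * u i := fun i =>
        add_nonneg (mul_nonneg ht1' (hvs0 i)) (mul_nonneg ht0 (hu0 i))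
      have htLs : t * (L - s) = 1 - s := div_mul_cancel₀ _ hLs0.ne'
      have hwl1' : l1 (fun i => (1 - t) * vs i + t * u i) = 1 := by
        unfold l1
        have habs : ∀ i, |(1 - t) * vs i + t * u i| = (1 - t) * vs i + t * u i := fun i =>
          abs_of_nonneg (hw0' i)
        simp only [habs]
        rw [Finset.sum_add_distrib, ← Finset.mul_sum, ← Finset.mul_sum, hvssum, husum]
        linear_combination htLs
      refine ⟨fun i => (1 - t) * vs i + t * u i, ⟨?_, hwl1'.le⟩, hw0', hwl1', ?_⟩
      · have h1 : l2 (fun i => (1 - t) * vs i + t * u i) ≤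
            l2 (fun i => (1 - t) * vs i) + l2 (fun i => t * u i) := l2_add_le _ _
        rw [l2_smul, l2_smul, abs_of_nonneg ht1', abs_of_nonneg ht0, hul2] at h1
        nlinarith [hvsS.1, hβ0.le]
      · intro x hx
        have hfw : f (fun i => (1 - t) * vs i + t * u i) = (1 - t) * f vs + t * f u := by
          unfold f
          simp only [add_mul, mul_assoc]
          rw [Finset.sum_add_distrib, ← Finset.mul_sum, ← Finset.mul_sum]
        rw [hfw]
        have := hvsmax x hx
        nlinarith [mul_nonneg ht0 (sub_nonneg.mpr hfvs_le)]
  -- basic facts about w and the maximal value M := f w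
  have hwsum : ∑ i, w i = 1 :=
    (Finset.sum_congr rfl fun i _ => (abs_of_nonneg (hw0 i)).symm).trans hwl1
  -- M is positive
  have hMpos : 0 < f w := by
    have hl1u' : l1 (fun i => (l1 h)⁻¹ * |h i|) = 1 := by
      rw [l1_smul (inv_nonneg.mpr hl1h.le), l1_abs, inv_mul_cancel₀ hl1h.ne']
    have hu'S : (fun i => (l1 h)⁻¹ * |h i|) ∈ S := by
      refine ⟨?_, hl1u'.le⟩
      rw [l2_smul, hl2abs, abs_of_nonneg (inv_nonneg.mpr hl1h.le), inv_mul_eq_div]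
      exact hβ₁
    have hpos : 0 < f (fun i => (l1 h)⁻¹ * |h i|) := by
      unfold f
      simp only [mul_assoc, ← Finset.mul_sum, ← sq]
      rw [hsumsq]
      exact mul_pos (inv_pos.mpr hl1h) (pow_pos hl2h 2)
    exact lt_of_lt_of_le hpos (hwmax _ hu'S)
  -- M is at most ‖h‖∞
  have hMle : f w ≤ linf h := by
    calc f w ≤ ∑ i, w i * linf h :=
        Finset.sum_le_sum fun i _ => mul_le_mul_of_nonneg_left (hlinf_ub i) (hw0 i)
      _ = linf h := by rw [← Finset.sum_mul, hwsum, one_mul]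
  -- M is at least ‖h‖₁/m
  have hl1sq : l1 h ^ 2 ≤ m * l2 h ^ 2 := by
    have h2 := Finset.sum_mul_sq_le_sq_mul_sq Finset.univ (fun _ : Fin m => (1:ℝ)) (fun i => |h i|)
    simp only [one_mul, one_pow, Finset.sum_const, Finset.card_univ, Fintype.card_fin,
      nsmul_eq_mul, sq_abs, mul_one] at h2
    rw [← hsumsq]
    unfold l1
    calc (∑ i, |h i|) ^ 2 ≤ (m:ℝ) * ∑ i, h i ^ 2 := h2
      _ = (m:ℝ) * ∑ i, |h i| ^ 2 := by
          congr 1; exact Finset.sum_congr rfl fun i _ => (sq_abs _).symm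
  have hβinv : Real.sqrt (1 / m) ≤ β := by
    rw [show β = Real.sqrt (β ^ 2) by rw [Real.sqrt_sq hβ0.le]]
    apply Real.sqrt_le_sqrt
    have h2 : (l2 h / l1 h) ^ 2 ≤ β ^ 2 := pow_le_pow_left₀ (div_nonneg hl2h.le hl1h.le) hβ₁ 2
    have h3 : 1 / (m:ℝ) ≤ (l2 h / l1 h) ^ 2 := by
      rw [div_pow, div_le_div_iff₀ hm0 (pow_pos hl1h 2)]
      linarith
    linarith
  have hMge : l1 h / m ≤ f w := by
    have hunifS : (fun _ : Fin m => 1 / (m:ℝ)) ∈ S := by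
      constructor
      · unfold l2
        rw [Finset.sum_const, Finset.card_univ, Fintype.card_fin, nsmul_eq_mul]
        rw [show (m:ℝ) * (1/(m:ℝ))^2 = 1/m by field_simp]
        exact hβinv
      · unfold l1
        have habs : |1 / (m:ℝ)| = 1 / (m:ℝ) := abs_of_nonneg (by positivity)
        simp only [habs]
        rw [Finset.sum_const, Finset.card_univ, Fintype.card_fin, nsmul_eq_mul,
          mul_one_div, div_self hm0.ne']
    have hval : f (fun _ => 1/(m:ℝ)) = l1 h / m := by
      unfold f l1
      rw [Finset.sum_div]
      exact Finset.sum_congr rfl fun j _ => by ring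
    exact hval ▸ hwmax _ hunifS
  obtain ⟨M, hM⟩ : ∃ M : ℝ, M = f w := ⟨f w, rfl⟩
  rw [← hM] at hMpos hMle hMge hwmax
  obtain ⟨α, hα⟩ : ∃ α : ℝ, α = linf h / M := ⟨_, rfl⟩
  have hα1 : 1 ≤ α := by rw [hα]; exact (one_le_div hMpos).mpr hMle
  have hαpos : 0 < α := lt_of_lt_of_le one_pos hα1
  have hαM : α * M = linf h := by rw [hα]; exact div_mul_cancel₀ _ hMpos.ne'
  have hαmax : α ≤ alphaMax m h := by
    unfold alphaMax
    rw [hα, div_le_div_iff₀ hMpos hl1h]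
    clear hα
    have h1 : l1 h ≤ m * M := by
      rw [div_le_iff₀ hm0] at hMge; linarith only [hMge]
    calc linf h * l1 h ≤ linf h * (m * M) := mul_le_mul_of_nonneg_left h1 hlinf_pos.le
      _ = m * linf h * M := by ring
  have hαwK : (fun j => α * w j) ∈ Kset m h α := by
    refine ⟨?_, fun j => mul_nonneg hαpos.le (hw0 j), ?_⟩
    · show linf h ≤ ∑ j, (α * w j) * |h j|
      simp only [mul_assoc]
      rw [← Finset.mul_sum]
      have hsum : (∑ i : Fin m, w i * |h i|) = M := by rw [hM]
      rw [hsum]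
      exact le_of_eq hαM.symm
    · show (∑ j, α * w j) = α
      rw [← Finset.mul_sum, hwsum, mul_one]
  obtain ⟨hγK, hγmin⟩ := hγ α hα1
  obtain ⟨hK1, hK2, hK3⟩ := hγK
  have hsq : ∑ j, γ α j ^ 2 ≤ ∑ j, (α * w j) ^ 2 := hγmin _ hαwK
  have goal1 : l1 (fun j => γ α j / α) = 1 := by
    unfold l1
    have habs : ∀ j, |γ α j / α| = γ α j / α := fun j =>
      abs_of_nonneg (div_nonneg (hK2 j) hαpos.le)
    simp only [habs]
    rw [← Finset.sum_div, hK3, div_self hαpos.ne']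
  have goal2 : l2 (fun j => γ α j / α) ≤ β := by
    refine le_trans (l2_le_l2 ?_) hwS.1
    have e : ∀ j : Fin m, (γ α j / α)^2 = γ α j ^2 / α^2 := fun j => div_pow _ _ _
    simp only [e]
    rw [← Finset.sum_div, div_le_iff₀ (by positivity)]
    calc ∑ j, γ α j ^2 ≤ ∑ j, (α * w j)^2 := hsq
      _ = (∑ j, w j ^2) * α^2 := by
          simp only [mul_pow]
          rw [← Finset.mul_sum]
          ring
  have hloc : locWidth (fun j => |h j|) β = M := by
    unfold locWidth
    apply IsGreatest.csSup_eq
    constructor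
    · exact ⟨w, hwS.1, hwl1.le, by rw [hM]⟩
    · rintro x ⟨v, hv2, hv1, rfl⟩
      exact hwmax v ⟨hv2, hv1⟩
  refine ⟨α, hα1, hαmax, goal1, goal2, ?_⟩
  rw [hloc]
  have hle : (∑ j, (γ α j / α) * |h j|) ≤ M := hwmax _ ⟨goal2, goal1.le⟩
  have hge : M ≤ ∑ j, (γ α j / α) * |h j| := by
    have hrw : (∑ j, (γ α j / α) * |h j|) = (∑ j, γ α j * |h j|) / α := by
      rw [Finset.sum_div]
      exact Finset.sum_congr rfl fun j _ => by ring
    rw [hrw, le_div_iff₀ hαpos]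
    calc M * α = linf h := by rw [mul_comm]; exact hαM
      _ ≤ _ := hK1
  linarith
end

section
/- Let m ≥ 1 and h ∈ ℝ^m with h ≠ 0. The function α ↦ ‖γ(α)‖₂²/α² is nonincreasing on the interval [1, α_max]. -/
theorem stmt4 (m : ℕ) (hm : 1 ≤ m) (h : Fin m → ℝ) (hh : h ≠ 0)
    (γ : ℝ → Fin m → ℝ) (hγ : IsGammaPath m h γ) :
    ∀ α₁ α₂ : ℝ, 1 ≤ α₁ → α₁ ≤ α₂ → α₂ ≤ alphaMax m h →
      (∑ j, (γ α₂ j) ^ 2) / α₂ ^ 2 ≤ (∑ j, (γ α₁ j) ^ 2) / α₁ ^ 2 := by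
  intro α₁ α₂ h1 h12 _
  have h2 : (1 : ℝ) ≤ α₂ := h1.trans h12
  have hα₁0 : 0 < α₁ := lt_of_lt_of_le one_pos h1
  have hα₂0 : 0 < α₂ := lt_of_lt_of_le one_pos h2
  have hc1 : (1 : ℝ) ≤ α₂ / α₁ := (one_le_div hα₁0).mpr h12
  have hc0 : 0 ≤ α₂ / α₁ := zero_le_one.trans hc1
  obtain ⟨⟨hK1, hpos1, hsum1⟩, -⟩ := hγ α₁ h1
  obtain ⟨-, hmin2⟩ := hγ α₂ h2
  set w : Fin m → ℝ := fun j => (α₂ / α₁) * γ α₁ j with hw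
  have hS0 : 0 ≤ ∑ j, γ α₁ j * |h j| :=
    Finset.sum_nonneg fun j _ => mul_nonneg (hpos1 j) (abs_nonneg _)
  have hwK : w ∈ Kset m h α₂ := by
    refine ⟨?_, fun j => mul_nonneg hc0 (hpos1 j), ?_⟩
    · have : (∑ j, w j * |h j|) = (α₂ / α₁) * ∑ j, γ α₁ j * |h j| := by
        rw [Finset.mul_sum]; exact Finset.sum_congr rfl fun j _ => by ring
      rw [this]
      calc linf h ≤ ∑ j, γ α₁ j * |h j| := hK1
        _ ≤ (α₂ / α₁) * ∑ j, γ α₁ j * |h j| := le_mul_of_one_le_left hS0 hc1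
    · rw [hw]
      simp only [← Finset.mul_sum, hsum1]
      field_simp
  have key : (∑ j, (γ α₂ j) ^ 2) ≤ (α₂ / α₁) ^ 2 * ∑ j, (γ α₁ j) ^ 2 := by
    have := hmin2 w hwK
    calc (∑ j, (γ α₂ j) ^ 2) ≤ ∑ j, (w j) ^ 2 := this
      _ = (α₂ / α₁) ^ 2 * ∑ j, (γ α₁ j) ^ 2 := by
        rw [Finset.mul_sum]; exact Finset.sum_congr rfl fun j _ => by ring
  rw [div_le_div_iff₀ (by positivity) (by positivity)]
  have := mul_le_mul_of_nonneg_right key (le_of_lt (pow_pos hα₁0 2))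
  calc (∑ j, (γ α₂ j) ^ 2) * α₁ ^ 2
      ≤ ((α₂ / α₁) ^ 2 * ∑ j, (γ α₁ j) ^ 2) * α₁ ^ 2 := this
    _ = (∑ j, (γ α₁ j) ^ 2) * α₂ ^ 2 := by field_simp
end

section
/- Let m ≥ 1 and h ∈ ℝ^m with h ≠ 0. The function α ↦ ‖γ(α)‖₂² is convex on the interval [1, ∞). -/
theorem stmt5 (m : ℕ) (hm : 1 ≤ m) (h : Fin m → ℝ) (hh : h ≠ 0)
    (γ : ℝ → Fin m → ℝ) (hγ : IsGammaPath m h γ) :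
    ConvexOn ℝ (Set.Ici (1 : ℝ)) (fun α => ∑ j, (γ α j) ^ 2) := by
  refine ⟨convex_Ici 1, ?_⟩
  intro x hx y hy a b ha hb hab
  have hx1 : (1:ℝ) ≤ x := hx
  have hy1 : (1:ℝ) ≤ y := hy
  have hz1 : (1:ℝ) ≤ a * x + b * y := by nlinarith
  obtain ⟨⟨hL1, hN1, hS1⟩, _⟩ := hγ x hx1
  obtain ⟨⟨hL2, hN2, hS2⟩, _⟩ := hγ y hy1
  obtain ⟨_, hmin⟩ := hγ (a * x + b * y) hz1
  set w : Fin m → ℝ := fun j => a * γ x j + b * γ y j with hw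
  have hwK : w ∈ Kset m h (a * x + b * y) := by
    refine ⟨?_, ?_, ?_⟩
    · have : ∑ j, w j * |h j| =
          a * (∑ j, γ x j * |h j|) + b * (∑ j, γ y j * |h j|) := by
        simp [hw, add_mul, mul_assoc, Finset.sum_add_distrib, Finset.mul_sum]
      rw [this]
      calc linf h = a * linf h + b * linf h := by rw [← add_mul, hab, one_mul]
        _ ≤ _ := add_le_add (mul_le_mul_of_nonneg_left hL1 ha)
            (mul_le_mul_of_nonneg_left hL2 hb)
    · intro j
      have := hN1 j
      have := hN2 j
      simp only [hw]
      positivity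
    · have : ∑ j, w j = a * (∑ j, γ x j) + b * (∑ j, γ y j) := by
        simp [hw, Finset.sum_add_distrib, Finset.mul_sum]
      rw [this, hS1, hS2]
  have key : (∑ j, (γ (a * x + b * y) j) ^ 2) ≤ ∑ j, (w j) ^ 2 := hmin w hwK
  have hsum : (∑ j, (w j) ^ 2) ≤
      a * (∑ j, (γ x j) ^ 2) + b * (∑ j, (γ y j) ^ 2) := by
    rw [Finset.mul_sum, Finset.mul_sum, ← Finset.sum_add_distrib]
    refine Finset.sum_le_sum fun j _ => ?_
    simp only [hw]
    nlinarith [mul_nonneg (mul_nonneg ha hb) (sq_nonneg (γ x j - γ y j))]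
  simp only [smul_eq_mul]
  exact key.trans hsum
end

section
/- Let m ≥ 1, h ∈ ℝ^m with h ≠ 0, n ≥ 1 an integer, and M > 0, f* > 0, κ > 0 real numbers. Then sup{ b²‖γ(α)‖₂² : b ≥ 0, α ∈ [1, α_max], b²‖h‖_∞²/n ≥ f* + (κ/2)·b²‖γ(α)‖₂², and b·α ≤ M } ≤ sup{ (M²/α²)·‖γ(α)‖₂² : α ∈ [1, α_max], M²‖h‖_∞²/n ≥ f*·α² + (κ/2)·M²‖γ(α)‖₂² }, with the convention that the supremum over the empty set is 0; moreover, if the first feasible set is nonempty then so is the second. -/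
lemma key_ineq (L S b α M fstar κ nR : ℝ) (hn : 1 ≤ nR) (hS : 0 ≤ S)
    (hb : 0 ≤ b) (hα : 1 ≤ α) (hM : 0 < M) (hf : 0 < fstar) (hκ : 0 < κ)
    (hcon : fstar + κ / 2 * (b ^ 2 * S) ≤ b ^ 2 * L ^ 2 / nR) (hbα : b * α ≤ M) :
    fstar * α ^ 2 + κ / 2 * (M ^ 2 * S) ≤ M ^ 2 * L ^ 2 / nR ∧
      b ^ 2 * S ≤ M ^ 2 / α ^ 2 * S := by
  have hn0 : (0:ℝ) < nR := by linarith
  have hcon' : (fstar + κ / 2 * (b ^ 2 * S)) * nR ≤ b ^ 2 * L ^ 2 :=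
    (le_div_iff₀ hn0).mp hcon
  have hb0 : 0 < b := by
    rcases hb.lt_or_eq with h' | h'
    · exact h'
    · exfalso; rw [← h'] at hcon'; nlinarith
  have hb2 : 0 < b ^ 2 := by positivity
  have hkey : κ / 2 * S * nR ≤ L ^ 2 := by
    by_contra hc
    push_neg at hc
    nlinarith [mul_lt_mul_of_pos_left hc hb2, mul_pos hf hn0]
  have hbα0 : 0 ≤ b * α := by nlinarith
  have hB : b ^ 2 * α ^ 2 ≤ M ^ 2 := by
    nlinarith [mul_nonneg (sub_nonneg.mpr hbα) (by nlinarith : (0:ℝ) ≤ M + b * α)]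
  constructor
  · rw [le_div_iff₀ hn0]
    nlinarith [mul_le_mul_of_nonneg_left hcon' (sq_nonneg α),
      mul_nonneg (sub_nonneg.mpr hB) (sub_nonneg.mpr hkey)]
  · have hα2 : (0:ℝ) < α ^ 2 := by positivity
    have hdiv : b ^ 2 ≤ M ^ 2 / α ^ 2 := by rw [le_div_iff₀ hα2]; exact hB
    exact mul_le_mul_of_nonneg_right hdiv hS


theorem stmt6 (m : ℕ) (hm : 1 ≤ m) (h : Fin m → ℝ) (hh : h ≠ 0)
    (γ : ℝ → Fin m → ℝ) (hγ : IsGammaPath m h γ)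
    (n : ℕ) (hn : 1 ≤ n) (M fstar κ : ℝ) (hM : 0 < M) (hf : 0 < fstar) (hκ : 0 < κ) :
    sSup {t : ℝ | ∃ b α : ℝ, 0 ≤ b ∧ 1 ≤ α ∧ α ≤ alphaMax m h ∧
        fstar + κ / 2 * (b ^ 2 * ∑ j, (γ α j) ^ 2) ≤ b ^ 2 * (linf h) ^ 2 / n ∧
        b * α ≤ M ∧ t = b ^ 2 * ∑ j, (γ α j) ^ 2}
      ≤ sSup {t : ℝ | ∃ α : ℝ, 1 ≤ α ∧ α ≤ alphaMax m h ∧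
        fstar * α ^ 2 + κ / 2 * (M ^ 2 * ∑ j, (γ α j) ^ 2) ≤ M ^ 2 * (linf h) ^ 2 / n ∧
        t = M ^ 2 / α ^ 2 * ∑ j, (γ α j) ^ 2} ∧
    ((∃ b α : ℝ, 0 ≤ b ∧ 1 ≤ α ∧ α ≤ alphaMax m h ∧
        fstar + κ / 2 * (b ^ 2 * ∑ j, (γ α j) ^ 2) ≤ b ^ 2 * (linf h) ^ 2 / n ∧
        b * α ≤ M) →
      (∃ α : ℝ, 1 ≤ α ∧ α ≤ alphaMax m h ∧
        fstar * α ^ 2 + κ / 2 * (M ^ 2 * ∑ j, (γ α j) ^ 2) ≤ M ^ 2 * (linf h) ^ 2 / n)) := by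
  have hn0 : (0:ℝ) < n := by exact_mod_cast Nat.pos_of_ne_zero (by omega)
  have hnR : (1:ℝ) ≤ n := by exact_mod_cast hn
  set S2 : Set ℝ := {t : ℝ | ∃ α : ℝ, 1 ≤ α ∧ α ≤ alphaMax m h ∧
        fstar * α ^ 2 + κ / 2 * (M ^ 2 * ∑ j, (γ α j) ^ 2) ≤ M ^ 2 * (linf h) ^ 2 / n ∧
        t = M ^ 2 / α ^ 2 * ∑ j, (γ α j) ^ 2} with hS2
  have hbdd : BddAbove S2 := by
    refine ⟨2 * M ^ 2 * (linf h) ^ 2 / (κ * n), ?_⟩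
    rintro u ⟨α, hα1, _, hfe, rfl⟩
    have hS : (0:ℝ) ≤ ∑ j, (γ α j) ^ 2 := Finset.sum_nonneg fun j _ => sq_nonneg _
    have hα2 : (0:ℝ) < α ^ 2 := by positivity
    have h1 : M ^ 2 / α ^ 2 ≤ M ^ 2 := by
      rw [div_le_iff₀ hα2]
      have h1a : (1:ℝ) ≤ α ^ 2 := by nlinarith
      nlinarith [mul_le_mul_of_nonneg_left h1a (sq_nonneg M)]
    have h2 : M ^ 2 / α ^ 2 * ∑ j, (γ α j) ^ 2 ≤ M ^ 2 * ∑ j, (γ α j) ^ 2 :=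
      mul_le_mul_of_nonneg_right h1 hS
    have hfe' : (fstar * α ^ 2 + κ / 2 * (M ^ 2 * ∑ j, (γ α j) ^ 2)) * n
        ≤ M ^ 2 * (linf h) ^ 2 := (le_div_iff₀ hn0).mp hfe
    have h3 : M ^ 2 * ∑ j, (γ α j) ^ 2 ≤ 2 * M ^ 2 * (linf h) ^ 2 / (κ * n) := by
      rw [le_div_iff₀ (by positivity)]
      nlinarith [mul_pos (mul_pos hf hα2) hn0]
    linarith
  constructor
  · apply Real.sSup_le
    · rintro t ⟨b, α, hb, hα1, hα2, hcon, hbα, rfl⟩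
      have hS : (0:ℝ) ≤ ∑ j, (γ α j) ^ 2 := Finset.sum_nonneg fun j _ => sq_nonneg _
      obtain ⟨h1, h2⟩ := key_ineq (linf h) (∑ j, (γ α j) ^ 2) b α M fstar κ n
        hnR hS hb hα1 hM hf hκ hcon hbα
      have hmem : M ^ 2 / α ^ 2 * ∑ j, (γ α j) ^ 2 ∈ S2 := ⟨α, hα1, hα2, h1, rfl⟩
      exact h2.trans (le_csSup hbdd hmem)
    · apply Real.sSup_nonneg
      rintro t ⟨α, _, _, _, rfl⟩
      positivity
  · rintro ⟨b, α, hb, hα1, hα2, hcon, hbα⟩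
    have hS : (0:ℝ) ≤ ∑ j, (γ α j) ^ 2 := Finset.sum_nonneg fun j _ => sq_nonneg _
    exact ⟨α, hα1, hα2, (key_ineq (linf h) (∑ j, (γ α j) ^ 2) b α M fstar κ n
      hnR hS hb hα1 hM hf hκ hcon hbα).1⟩
end
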